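/- There exists a ℂ-linear homeomorphism K × K ≅ K, where K = ℂ((t)) carries its t-adic topology and K × K the product topology; i.e. K ⊕ K ≅ K as topological ℂ-vector spaces. -/

import Mathlib

/-!
Interleaving coefficients, `(f, g) ↦ f(t²) + t·g(t²)`, is a linear bijection `K × K → K` whose
inverse takes the even and the odd part of a Laurent series. Both directions move the `t`-adic
order by a bounded factor, so both are continuous.
-/

open Set Filter Topology
open scoped HahnSeries LaurentSeries

theorem Set.IsPWO.preimage_orderEmbedding {α β : Type*} [Preorder α] [Preorder β] {s : Set β}
    (hs : s.IsPWO) (f : α ↪o β) : (f ⁻¹' s).IsPWO :=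
  partiallyWellOrderedOn_iff_exists_lt.mpr fun g hg =>
    let ⟨m, n, hmn, hle⟩ := hs.exists_lt (f := f ∘ g) hg
    ⟨m, n, hmn, f.le_iff_le.mp hle⟩

namespace HahnSeries

variable {Γ Γ₁ Γ₂ R : Type*} [PartialOrder Γ] [PartialOrder Γ₁] [PartialOrder Γ₂]

section Zero

variable [Zero R]

def comapDomain (f : Γ₁ ↪o Γ) (x : R⟦Γ⟧) : R⟦Γ₁⟧ where
  coeff := x.coeff ∘ f
  isPWO_support' := x.isPWO_support.preimage_orderEmbedding f

@[simp]
theorem comapDomain_coeff (f : Γ₁ ↪o Γ) (x : R⟦Γ⟧) (a : Γ₁) :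
    (comapDomain f x).coeff a = x.coeff (f a) := rfl

end Zero

section Semiring

variable [Semiring R]

def comapDomainLinearMap (f : Γ₁ ↪o Γ) : R⟦Γ⟧ →ₗ[R] R⟦Γ₁⟧ where
  toFun := comapDomain f
  map_add' _ _ := rfl
  map_smul' _ _ := rfl

noncomputable def embDomainProdEquiv (f : Γ₁ ↪o Γ) (g : Γ₂ ↪o Γ)
    (hfg : IsCompl (range f) (range g)) : (R⟦Γ₁⟧ × R⟦Γ₂⟧) ≃ₗ[R] R⟦Γ⟧ :=
  have hf (a : Γ₁) : f a ∉ range g := hfg.disjoint.notMem_of_mem_left (mem_range_self a)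
  have hg (a : Γ₂) : g a ∉ range f := hfg.disjoint.notMem_of_mem_right (mem_range_self a)
  { (embDomainLinearMap f).coprod (embDomainLinearMap g) with
    invFun := fun x => (comapDomain f x, comapDomain g x)
    left_inv := fun _ => Prod.ext
      (by ext a; simp [embDomain_of_notMem_range (hf a)])
      (by ext a; simp [embDomain_of_notMem_range (hg a)])
    right_inv := fun x => by
      ext b
      rcases hfg.codisjoint.top_le (mem_univ b) with ⟨a, rfl⟩ | ⟨a, rfl⟩
      · simp [embDomain_of_notMem_range (hf a)]
      · simp [embDomain_of_notMem_range (hg a)] }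

end Semiring

end HahnSeries

namespace LaurentSeries

variable {K : Type*} [Field K]

open HahnSeries

open WithZero in
theorem hasBasis_nhds_zero :
    (𝓝 (0 : K⸨X⸩)).HasBasis (fun _ : ℤ => True) fun D => {x | ∀ n < D, x.coeff n = 0} := by
  refine (Valued.hasBasis_nhds_zero K⸨X⸩ ℤᵐ⁰).to_hasBasis' (fun γ _ => ?_) (fun D _ => ?_)
  · have hγ : MonoidWithZeroHom.ValueGroup₀.embedding γ.1 ≠ 0 := by simp
    refine ⟨1 - log (MonoidWithZeroHom.ValueGroup₀.embedding γ.1), trivial, fun x hx => ?_⟩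
    rw [mem_ofPred_eq, Valuation.restrict_lt_iff_lt_embedding]
    rw [mem_ofPred_eq, ← valuation_le_iff_coeff_lt_eq_zero] at hx
    exact hx.trans_lt ((exp_lt_exp.mpr (by omega)).trans_eq (exp_log hγ))
  · obtain ⟨y, hy⟩ := valuation_surjective K (exp (-D))
    have hr : Valued.v.restrict y ≠ 0 := by
      rw [← pos_iff_ne_zero, Valuation.restrict_pos_iff, hy]
      exact exp_pos
    refine mem_of_superset ((Valued.isOpen_closedBall K⸨X⸩ hr).mem_nhds (by simp)) fun x hx => ?_
    rw [mem_ofPred_eq, ← valuation_le_iff_coeff_lt_eq_zero, ← hy]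
    simpa using hx

theorem continuous_of_forall_coeff_eq_zero (φ : K⸨X⸩ →+ K⸨X⸩)
    (h : ∀ D, ∃ D', ∀ x : K⸨X⸩, (∀ n < D', x.coeff n = 0) → ∀ n < D, (φ x).coeff n = 0) :
    Continuous φ := by
  refine continuous_of_continuousAt_zero φ ?_
  rw [ContinuousAt, map_zero, hasBasis_nhds_zero.tendsto_iff hasBasis_nhds_zero]
  simpa using h

theorem continuous_comapDomain (f : ℤ ↪o ℤ) : Continuous (comapDomain f : K⸨X⸩ → K⸨X⸩) :=
  continuous_of_forall_coeff_eq_zero (comapDomainLinearMap f).toAddMonoidHom fun D =>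
    ⟨f D, fun _ hx n hn => hx (f n) (f.lt_iff_lt.mpr hn)⟩

theorem continuous_embDomain (f : ℤ ↪o ℤ) : Continuous (embDomain f : K⸨X⸩ → K⸨X⸩) := by
  refine continuous_of_forall_coeff_eq_zero (embDomainLinearMap f).toAddMonoidHom fun D => ?_
  obtain ⟨_, ⟨D', rfl⟩, hD'⟩ :=
    not_bddAbove_iff.mp f.strictMono.not_bddAbove_range_of_isSuccArchimedean D
  refine ⟨D', fun x hx b hb => ?_⟩
  by_cases hbf : b ∈ range f
  · obtain ⟨a, rfl⟩ := hbf
    simpa using hx a (f.lt_iff_lt.mp (hb.trans hD'))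
  · simpa using embDomain_of_notMem_range hbf

noncomputable def embDomainProdContinuousLinearEquiv (f g : ℤ ↪o ℤ)
    (hfg : IsCompl (range f) (range g)) : (K⸨X⸩ × K⸨X⸩) ≃L[K] K⸨X⸩ where
  toLinearEquiv := embDomainProdEquiv f g hfg
  continuous_toFun := ((continuous_embDomain f).comp continuous_fst).add
    ((continuous_embDomain g).comp continuous_snd)
  continuous_invFun := (continuous_comapDomain f).prodMk (continuous_comapDomain g)

end LaurentSeries

noncomputable def Int.twoMulAddEmbedding (r : ℤ) : ℤ ↪o ℤ :=
  OrderEmbedding.ofMapLEIff (fun n => 2 * n + r) fun _ _ => by omega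

theorem Int.isCompl_range_twoMulAddEmbedding_zero_one :
    IsCompl (Set.range (Int.twoMulAddEmbedding 0)) (Set.range (Int.twoMulAddEmbedding 1)) := by
  have h_even : Set.range (Int.twoMulAddEmbedding 0) = {n | Even n} := by
    ext n; simp [Int.twoMulAddEmbedding, Even, two_mul, eq_comm]
  have h_odd : Set.range (Int.twoMulAddEmbedding 1) = {n | Even n}ᶜ := by
    ext n; simp [Int.twoMulAddEmbedding, Odd]
  rw [h_even, h_odd]
  exact isCompl_compl

/-- `K ⊕ K ≅ K` as topological ℂ-vector spaces, where `K = ℂ((t))` carries the t-adic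
topology (from its `Valued` instance) and `K × K` the product topology. -/
theorem laurentSeries_prod_homeomorph_self :
    Nonempty ((LaurentSeries ℂ × LaurentSeries ℂ) ≃L[ℂ] LaurentSeries ℂ) :=
  ⟨LaurentSeries.embDomainProdContinuousLinearEquiv _ _
    Int.isCompl_range_twoMulAddEmbedding_zero_one⟩
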